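/- arXiv:1310.4856 — 3 statements merged into one kernel-verified Lean document; each statement's English description precedes it below -/
import Mathlib

section
/- Let 𝒜 = (A, Σ, δ, ρ) be an invertible Mealy automaton (each ρ_x : Σ → Σ a permutation) such that its dual 𝔡(𝒜) = (Σ, A, ρ, δ) is also invertible (each δ_i : A → A a permutation, i.e. 𝒜 is reversible). Then the group generated by 𝒜 (the group of bijections of Σ* generated by the extended production functions ρ_x, x ∈ A) is finite if and only if the group generated by 𝔡(𝒜) is finite. -/
/-- A Mealy automaton `(A, Σ, δ, ρ)` with stateset `A` and alphabet `X`: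
`δ i : A → A` for each letter `i ∈ X`, and `ρ x : X → X` for each state `x ∈ A`. -/
structure Mealy (A X : Type*) where
  δ : X → A → A
  ρ : A → X → X

namespace Mealy

variable {A X : Type*}

/-- The extended production function `ρ_x : Σ* → Σ*`, defined by
`ρ_x(ε) = ε` and `ρ_x(i·v) = ρ_x(i)·ρ_{δ_i(x)}(v)`. -/
def run (M : Mealy A X) : A → List X → List X
  | _, [] => []
  | x, i :: v => M.ρ x i :: run M (M.δ i x) v

end Mealy

namespace Mealy

/-- The dual automaton `𝔡(𝒜) = (Σ, A, ρ, δ)`: the roles of stateset and alphabet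
are exchanged. -/
def dual {A X : Type*} (M : Mealy A X) : Mealy X A := ⟨M.ρ, M.δ⟩

end Mealy

namespace Mealy

variable {A X : Type*}

/-- Run a word of states on a word of letters. -/
def runs (M : Mealy A X) : List A → List X → List X
  | [], v => v
  | x :: u, v => M.runs u (M.run x v)

/-- The image of a single letter under a word of states. -/
def fold1 (M : Mealy A X) (u : List A) (i : X) : X := u.foldl (fun j x => M.ρ x j) i

lemma runs_nil (M : Mealy A X) : ∀ u : List A, M.runs u [] = []
  | [] => rfl
  | x :: u => by
      show M.runs u (M.run x []) = []
      rw [show M.run x [] = [] from rfl, runs_nil M u]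

lemma runs_cons (M : Mealy A X) : ∀ (u : List A) (i : X) (v : List X),
    M.runs u (i :: v) = M.fold1 u i :: M.runs (M.dual.run i u) v
  | [], _, _ => rfl
  | x :: u, i, v => by
      show M.runs u (M.run x (i :: v)) = _
      rw [show M.run x (i :: v) = M.ρ x i :: M.run (M.δ i x) v from rfl,
        runs_cons M u (M.ρ x i) (M.run (M.δ i x) v)]
      rfl

lemma runs_append (M : Mealy A X) : ∀ (u u' : List A) (v : List X),
    M.runs (u ++ u') v = M.runs u' (M.runs u v)
  | [], _, _ => rfl
  | _ :: u, u', v => runs_append M u u' _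

/-- Key combinatorial lemma: the action of a state word `u` is determined by the
single-letter actions of all its dual-translates. -/
lemma key (M : Mealy A X) : ∀ (v : List X) (u u' : List A),
    (∀ (p : List X) (i : X), M.fold1 (M.dual.runs p u) i = M.fold1 (M.dual.runs p u') i) →
    M.runs u v = M.runs u' v
  | [], u, u', _ => by rw [runs_nil, runs_nil]
  | i :: v, u, u', h => by
      have h0 : M.fold1 u i = M.fold1 u' i := h [] i
      rw [runs_cons, runs_cons, h0,
        key M v (M.dual.run i u) (M.dual.run i u') (fun p j => h (i :: p) j)]

/-- If the dual has finitely many word-actions, so does the automaton itself. -/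
lemma finite_runs (M : Mealy A X) [Finite X]
    (h : (Set.range fun v => M.dual.runs v).Finite) :
    (Set.range fun u => M.runs u).Finite := by
  haveI := h.to_subtype
  let S : Set (List A → List A) := Set.range fun v => M.dual.runs v
  haveI : Finite S := h.to_subtype
  let q : List A → (S → (X → X)) := fun u T i => M.fold1 (T.1 u) i
  have hfac : Function.FactorsThrough (fun u => M.runs u) q := by
    intro u u' hq
    funext v
    refine key M v u u' (fun p i => ?_)
    exact congrFun (congrFun hq ⟨M.dual.runs p, ⟨p, rfl⟩⟩) i
  have hsub : Set.range (fun u => M.runs u) ⊆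
      Set.range (Function.extend q (fun u => M.runs u) (fun _ => id)) := by
    rintro _ ⟨u, rfl⟩
    exact ⟨q u, hfac.extend_apply _ u⟩
  exact (Set.finite_range _).subset hsub

lemma runs_exists (M : Mealy A X) (e : A → Equiv.Perm (List X))
    (he : ∀ x, ⇑(e x) = M.run x) :
    ∀ u : List A, ∃ g ∈ Subgroup.closure (Set.range e), ⇑g = M.runs u
  | [] => ⟨1, one_mem _, by funext v; rfl⟩
  | x :: u => by
      obtain ⟨g, hg, hge⟩ := runs_exists M e he u
      refine ⟨g * e x, mul_mem hg (Subgroup.subset_closure ⟨x, rfl⟩), ?_⟩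
      funext v
      show g ((e x) v) = M.runs u (M.run x v)
      rw [he, hge]

/-- If the generated group is finite, the set of word-actions is finite. -/
lemma finite_of_group (M : Mealy A X) (e : A → Equiv.Perm (List X))
    (he : ∀ x, ⇑(e x) = M.run x)
    (h : Finite (Subgroup.closure (Set.range e))) :
    (Set.range fun u => M.runs u).Finite := by
  have hsub : Set.range (fun u => M.runs u) ⊆
      Set.range (fun g : Subgroup.closure (Set.range e) =>
        ⇑(g.1 : Equiv.Perm (List X))) := by
    rintro _ ⟨u, rfl⟩
    obtain ⟨g, hg, hge⟩ := runs_exists M e he u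
    exact ⟨⟨g, hg⟩, hge⟩
  exact (Set.finite_range _).subset hsub

/-- Conversely, if the set of word-actions is finite, the generated group is finite. -/
lemma group_of_finite (M : Mealy A X) (e : A → Equiv.Perm (List X))
    (he : ∀ x, ⇑(e x) = M.run x)
    (h : (Set.range fun u => M.runs u).Finite) :
    Finite (Subgroup.closure (Set.range e)) := by
  haveI := h.to_subtype
  set N := Submonoid.closure (Set.range e) with hN
  have hmem : ∀ g ∈ N, ∃ u : List A, ⇑g = M.runs u := by
    intro g hg
    induction hg using Submonoid.closure_induction with
    | mem g hgm =>
        obtain ⟨x, rfl⟩ := hgm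
        refine ⟨[x], ?_⟩
        funext v
        rw [he]
        rfl
    | one => exact ⟨[], by funext v; rfl⟩
    | mul g g' _ _ ih ih' =>
        obtain ⟨u, hu⟩ := ih
        obtain ⟨u', hu'⟩ := ih'
        refine ⟨u' ++ u, ?_⟩
        funext v
        show g (g' v) = _
        rw [hu, hu', runs_append]
  -- N is finite
  haveI hNfin : Finite N := by
    have := Finite.of_injective (fun g : N =>
        (⟨⇑(g.1 : Equiv.Perm (List X)), by
          obtain ⟨u, hu⟩ := hmem g.1 g.2
          exact ⟨u, hu.symm⟩⟩ : Set.range fun u => M.runs u)) ?_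
    · exact this
    · intro g g' hgg
      have : ⇑(g.1 : Equiv.Perm (List X)) = ⇑(g'.1 : Equiv.Perm (List X)) :=
        congrArg Subtype.val hgg
      exact Subtype.ext (Equiv.coe_fn_injective this)
  -- finite submonoid of a group is closed under inverses
  have hinvmem : ∀ g ∈ N, g⁻¹ ∈ N := by
    have main : ∀ g ∈ N, ∀ m n : ℕ, m < n → g ^ m = g ^ n → g⁻¹ ∈ N := by
      intro g hg m n hlt hpow
      have h2 : g ^ m * g ^ (n - m) = g ^ m * 1 := by
        rw [mul_one, ← pow_add, hpow]
        congr 1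
        omega
      have h1 : g ^ (n - m) = 1 := mul_left_cancel h2
      have h3 : g * g ^ (n - m - 1) = 1 := by
        rw [← pow_succ']
        convert h1 using 2
        omega
      rw [(eq_inv_of_mul_eq_one_right h3).symm]
      exact pow_mem hg _
    intro g hg
    obtain ⟨m, n, hmn, hpow⟩ := Finite.exists_ne_map_eq_of_infinite
      (fun k : ℕ => (⟨g ^ k, pow_mem hg k⟩ : N))
    have hpow' : g ^ m = g ^ n := congrArg Subtype.val hpow
    rcases hmn.lt_or_gt with hlt | hlt
    · exact main g hg m n hlt hpow'
    · exact main g hg n m hlt hpow'.symm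
  let H : Subgroup (Equiv.Perm (List X)) :=
    { N with inv_mem' := fun {g} hg => hinvmem g hg }
  have hle : Subgroup.closure (Set.range e) ≤ H :=
    (Subgroup.closure_le H).2 Submonoid.subset_closure
  exact Finite.of_injective
    (fun g : Subgroup.closure (Set.range e) => (⟨g.1, hle g.2⟩ : N))
    (fun g g' hgg => by
      apply Subtype.ext
      exact congrArg (fun h : N => h.1) hgg)

end Mealy

/-- let `𝒜` be an invertible and reversible Mealy automaton (each
`ρ_x : Σ → Σ` and each `δ_i : A → A` is a permutation).  The extended production
functions of `𝒜` are then bijections of `Σ*`, given as permutations `e x` with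
`⇑(e x) = ρ_x`, and similarly `d i` for the dual.  Then the group generated by `𝒜`
(the group of bijections of `Σ*` generated by the `ρ_x`) is finite if and only if
the group generated by `𝔡(𝒜)` is finite. -/
theorem mealy_group_finite_iff_dual_group_finite {A X : Type*} [Fintype A] [Fintype X]
    [Nonempty A] [Nonempty X] (M : Mealy A X)
    (hinv : ∀ x : A, Function.Bijective (M.ρ x))
    (hrev : ∀ i : X, Function.Bijective (fun a => M.δ i a))
    (e : A → Equiv.Perm (List X)) (he : ∀ x : A, ⇑(e x) = M.run x)
    (d : X → Equiv.Perm (List A)) (hd : ∀ i : X, ⇑(d i) = M.dual.run i) :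
    Finite ↥(Subgroup.closure (Set.range e)) ↔
      Finite ↥(Subgroup.closure (Set.range d)) := by
  constructor
  · intro hE
    have h1 : (Set.range fun u => M.runs u).Finite := Mealy.finite_of_group M e he hE
    have h2 : (Set.range fun v => M.dual.runs v).Finite :=
      Mealy.finite_runs M.dual (h := h1)
    exact Mealy.group_of_finite M.dual d hd h2
  · intro hD
    have h1 : (Set.range fun v => M.dual.runs v).Finite := Mealy.finite_of_group M.dual d hd hD
    have h2 : (Set.range fun u => M.runs u).Finite := Mealy.finite_runs M h1
    exact Mealy.group_of_finite M e he h2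
end

section
/- Let 𝒜 = (A, Σ, δ, ρ) be a Mealy automaton and let B ⊆ A be the set of states accessible (via the transition maps δ_i) from some state lying on a cycle, i.e. from some y ∈ A for which there is a nonempty word u ∈ Σ* with δ_u(y) = y. Then B is nonempty and closed under all δ_i, and the semigroup generated by the restricted Mealy automaton (B, Σ, δ|_B, ρ|_B) is finite if and only if the semigroup generated by 𝒜 is finite (pruning the states not accessible from a cycle does not change finiteness). -/
namespace Mealy

/-- `δ_u = δ_{u_n} ∘ ⋯ ∘ δ_{u_1}` (with `δ_ε = id`). -/
def trans {A X : Type*} (M : Mealy A X) (u : List X) (a : A) : A :=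
  u.foldl (fun b i => M.δ i b) a

/-- `run` as an element of the monoid `Function.End (List X)`. -/
def runE {A X : Type*} (M : Mealy A X) (x : A) : Function.End (List X) := M.run x

/-- The semigroup `⟨𝒜⟩₊` generated by the automaton. -/
def sgp {A X : Type*} (M : Mealy A X) : Subsemigroup (Function.End (List X)) :=
  Subsemigroup.closure (Set.range M.runE)

/-- The restriction of a Mealy automaton to a subset of states closed under the
transition maps. -/
def restrict {A X : Type*} (M : Mealy A X) (B : Set A)
    (hB : ∀ i : X, ∀ x ∈ B, M.δ i x ∈ B) : Mealy B X where
  δ i x := ⟨M.δ i x.1, hB i x.1 x.2⟩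
  ρ x := M.ρ x.1

end Mealy

namespace Mealy

variable (M : Mealy A X)

lemma run_length (x : A) (u : List X) : (M.run x u).length = u.length := by
  induction u generalizing x with
  | nil => rfl
  | cons i v ih => simp [Mealy.run, ih]

lemma trans_cons (i : X) (u : List X) (a : A) :
    M.trans (i :: u) a = M.trans u (M.δ i a) := rfl

lemma trans_append (u v : List X) (a : A) :
    M.trans (u ++ v) a = M.trans v (M.trans u a) :=
  List.foldl_append

lemma run_append (x : A) (u v : List X) :
    M.run x (u ++ v) = M.run x u ++ M.run (M.trans u x) v := by
  induction u generalizing x with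
  | nil => rfl
  | cons i u ih => simp [Mealy.run, ih, trans_cons]

lemma restrict_run (B : Set A) (hB : ∀ i : X, ∀ x ∈ B, M.δ i x ∈ B)
    (x : B) (u : List X) : (M.restrict B hB).run x u = M.run x.1 u := by
  induction u generalizing x with
  | nil => rfl
  | cons i v ih =>
    exact congrArg (M.ρ x.1 i :: ·) (ih ⟨M.δ i x.1, hB i x.1 x.2⟩)

end Mealy

/-- let `B` be the set of states accessible from some state lying on a
cycle.  Then `B` is nonempty, closed under the transition maps `δ_i`, and the
semigroup generated by the Mealy automaton restricted to `B` is finite if and only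
if the semigroup generated by `𝒜` is finite (pruning the states which are not
accessible from a cycle does not change finiteness). -/
theorem mealy_prune_preserves_finiteness {A X : Type*} [Fintype A] [Fintype X]
    [Nonempty A] [Nonempty X] (M : Mealy A X) (B : Set A)
    (hBdef : B = {a : A | ∃ y : A,
      (∃ u : List X, u ≠ [] ∧ M.trans u y = y) ∧ ∃ v : List X, M.trans v y = a}) :
    B.Nonempty ∧
    ∃ hB : ∀ i : X, ∀ x ∈ B, M.δ i x ∈ B,
      (Finite ↥(M.restrict B hB).sgp ↔ Finite ↥M.sgp) := by
  classical
  set N := Fintype.card A with hNdef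
  have key2 : ∀ (x : A) (u : List X), N ≤ u.length → ∀ j k : ℕ, j < k → k ≤ N →
      M.trans (u.take j) x = M.trans (u.take k) x → M.trans u x ∈ B := by
    intro x u hu j k hjk hkN heq
    set y := M.trans (u.take j) x with hy
    set c := (u.take k).drop j with hc
    have h1 : (u.take k).take j = u.take j := by
      rw [List.take_take, min_eq_left hjk.le]
    have hksplit : u.take k = u.take j ++ c := by
      conv_lhs => rw [← List.take_append_drop j (u.take k)]
      rw [h1]
    have hcy : M.trans c y = y := by
      have : M.trans (u.take k) x = M.trans c y := by
        rw [hksplit, M.trans_append]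
      rw [← heq] at this
      exact this.symm
    have hcne : c ≠ [] := by
      have hlen : c.length = k - j := by
        rw [hc, List.length_drop, List.length_take, min_eq_left (hkN.trans hu)]
      intro hnil
      rw [hnil] at hlen
      simp at hlen
      omega
    have husplit : M.trans u x = M.trans (u.drop k) y := by
      conv_lhs => rw [← List.take_append_drop k u]
      rw [M.trans_append, ← heq]
    rw [hBdef]
    exact ⟨y, ⟨c, hcne, hcy⟩, u.drop k, husplit.symm⟩
  have key : ∀ (x : A) (u : List X), N ≤ u.length → M.trans u x ∈ B := by
    intro x u hu
    have hninj : ¬ Function.Injective (fun k : Fin (N + 1) => M.trans (u.take k) x) := by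
      intro hinj
      have := Fintype.card_le_of_injective _ hinj
      simp [hNdef] at this
    rw [Function.not_injective_iff] at hninj
    obtain ⟨j, k, heq, hne⟩ := hninj
    rcases lt_or_gt_of_ne hne with h | h
    · exact key2 x u hu j k (Fin.lt_def.mp h) (Nat.lt_succ_iff.mp k.isLt) heq
    · exact key2 x u hu k j (Fin.lt_def.mp h) (Nat.lt_succ_iff.mp j.isLt) heq.symm
  -- B nonempty
  have hBne : B.Nonempty := by
    obtain ⟨i⟩ := ‹Nonempty X›
    obtain ⟨x⟩ := ‹Nonempty A›
    exact ⟨_, key x (List.replicate N i) (by simp)⟩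
  -- B closed
  have hB : ∀ i : X, ∀ x ∈ B, M.δ i x ∈ B := by
    intro i a ha
    rw [hBdef] at ha ⊢
    obtain ⟨y, hcyc, v, hv⟩ := ha
    exact ⟨y, hcyc, v ++ [i], by rw [M.trans_append, hv]; rfl⟩
  refine ⟨hBne, hB, ?_, ?_⟩
  · -- Finite restricted → Finite full
    intro hS
    set S := (M.restrict B hB).sgp with hSdef
    haveI : Finite {u : List X // u.length ≤ N} :=
      (List.finite_length_le X N).to_subtype
    haveI : Finite ↥S := hS
    haveI : Finite {u : List X // u.length = N} :=
      (List.finite_length_eq X N).to_subtype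
    set Ψ : (({u : List X // u.length ≤ N} → {v : List X // v.length ≤ N}) ×
        ({u : List X // u.length = N} → S)) → Function.End (List X) :=
      fun p v => if h : v.length ≤ N then (p.1 ⟨v, h⟩).1
        else (p.1 ⟨v.take N, by rw [List.length_take]; exact min_le_left _ _⟩).1 ++
          (p.2 ⟨v.take N, by rw [List.length_take]; exact min_eq_left (le_of_not_ge h)⟩).1
            (v.drop N) with hΨdef
    have hQ : ∀ f ∈ M.sgp, (∀ u : List X, (f u).length = u.length) ∧
        ∀ u : List X, u.length = N → ∃ g ∈ S, ∀ w, f (u ++ w) = f u ++ g w := by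
      intro f hf
      induction hf using Subsemigroup.closure_induction with
      | mem f hf =>
        obtain ⟨x, rfl⟩ := hf
        refine ⟨M.run_length x, fun u hu => ?_⟩
        refine ⟨(M.restrict B hB).runE ⟨M.trans u x, key x u hu.ge⟩,
          Subsemigroup.subset_closure ⟨_, rfl⟩, fun w => ?_⟩
        show M.run x (u ++ w) = M.run x u ++ (M.restrict B hB).run ⟨M.trans u x, _⟩ w
        rw [M.restrict_run, M.run_append]
      | mul f g hf hg ihf ihg =>
        refine ⟨fun u => ?_, fun u hu => ?_⟩
        · show (f (g u)).length = u.length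
          rw [ihf.1, ihg.1]
        · obtain ⟨g2, hg2S, hg2⟩ := ihg.2 u hu
          obtain ⟨g1, hg1S, hg1⟩ := ihf.2 (g u) (by rw [ihg.1]; exact hu)
          refine ⟨g1 * g2, mul_mem hg1S hg2S, fun w => ?_⟩
          show f (g (u ++ w)) = f (g u) ++ g1 (g2 w)
          rw [hg2 w, hg1 (g2 w)]
    have hsub : (M.sgp : Set (Function.End (List X))) ⊆ Set.range Ψ := by
      intro f hf
      obtain ⟨hlen, hdec⟩ := hQ f hf
      choose g hgS hgw using hdec
      refine ⟨(fun u => ⟨f u.1, by rw [hlen]; exact u.2⟩,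
        fun u => ⟨g u.1 u.2, hgS u.1 u.2⟩), ?_⟩
      funext v
      by_cases h : v.length ≤ N
      · simp only [hΨdef, dif_pos h]
      · simp only [hΨdef, dif_neg h]
        have hv : N ≤ v.length := le_of_not_ge h
        have htake : (v.take N).length = N := by
          rw [List.length_take]; exact min_eq_left hv
        have h2 := hgw (v.take N) htake (v.drop N)
        rw [List.take_append_drop] at h2
        exact h2.symm
    have hfin : (M.sgp : Set (Function.End (List X))).Finite :=
      (Set.finite_range Ψ).subset hsub
    exact hfin.to_subtype
  · -- Finite full → Finite restricted
    intro hM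
    have hle : (M.restrict B hB).sgp ≤ M.sgp := by
      apply Subsemigroup.closure_le.mpr
      rintro _ ⟨x, rfl⟩
      apply Subsemigroup.subset_closure
      refine ⟨x.1, ?_⟩
      funext u
      exact (M.restrict_run B hB x u).symm
    have hfin : (M.sgp : Set (Function.End (List X))).Finite :=
      Set.finite_coe_iff.mp hM
    exact (hfin.subset hle).to_subtype
end

section
/- For any two finite semigroups S and T there exists a Mealy automaton 𝒜 = (A, Σ, δ, ρ) such that the semigroup generated by 𝒜 is isomorphic to S and the semigroup generated by its dual 𝔡(𝒜) = (Σ, A, ρ, δ) is isomorphic to T (any pair of finite semigroups can be generated by a pair of dual Mealy automata). -/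
def pairMealy (S T : Type) [Semigroup S] [Semigroup T] :
    Mealy (S × WithOne T) (T × WithOne S) where
  δ := fun x a => (a.1, ↑x.1 * a.2)
  ρ := fun a x => (x.1, ↑a.1 * x.2)

lemma pairMealy_dual (S T : Type) [Semigroup S] [Semigroup T] :
    (pairMealy S T).dual = pairMealy T S := rfl

lemma pairMealy_run (S T : Type) [Semigroup S] [Semigroup T]
    (w : List (T × WithOne S)) (a : S × WithOne T) :
    (pairMealy S T).run a w = w.map (fun x => (x.1, (↑a.1 : WithOne S) * x.2)) := by
  induction w generalizing a with
  | nil => rfl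
  | cons i v ih =>
      show _ :: (pairMealy S T).run ((pairMealy S T).δ i a) v = _
      rw [ih]
      rfl

def pairHom (S T : Type) [Semigroup S] [Semigroup T] :
    S →ₙ* Function.End (List (T × WithOne S)) where
  toFun s := fun w => w.map (fun x => (x.1, ↑s * x.2))
  map_mul' s s' := by
    funext w
    show List.map _ w = List.map _ (List.map _ w)
    simp [List.map_map, Function.comp, mul_assoc]

lemma pairHom_inj (S T : Type) [Semigroup S] [Semigroup T] [Nonempty T] :
    Function.Injective (pairHom S T) := by
  obtain ⟨t⟩ := ‹Nonempty T›
  intro s s' h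
  have := congrFun h [(t, (1 : WithOne S))]
  change List.map _ _ = List.map _ _ at this
  simp [pairHom] at this
  exact this

lemma pairMealy_sgp (S T : Type) [Semigroup S] [Semigroup T] :
    (pairMealy S T).sgp = (pairHom S T).srange := by
  have hr : Set.range (pairMealy S T).runE = Set.range (pairHom S T) := by
    ext f
    constructor
    · rintro ⟨a, rfl⟩
      exact ⟨a.1, by funext w; exact (pairMealy_run S T w a).symm⟩
    · rintro ⟨s, rfl⟩
      exact ⟨(s, 1), by funext w; exact pairMealy_run S T w (s, 1)⟩
  rw [Mealy.sgp, hr, ← MulHom.coe_srange, Subsemigroup.closure_eq]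

noncomputable def pairEquiv (S T : Type) [Semigroup S] [Semigroup T] [Nonempty T] :
    ↥(pairMealy S T).sgp ≃* S :=
  ((MulEquiv.subsemigroupCongr (pairMealy_sgp S T)).trans
    (MulEquiv.ofBijective (pairHom S T).srangeRestrict
      ⟨fun a b h => pairHom_inj S T (by
          have := congrArg Subtype.val h
          simpa using this),
        MulHom.srangeRestrict_surjective _⟩).symm)

/-- any pair of (nonempty) finite semigroups `S`, `T` can be generated
by a pair of dual Mealy automata: there is a Mealy automaton `𝒜` with `⟨𝒜⟩₊ ≃* S`
and `⟨𝔡(𝒜)⟩₊ ≃* T`. -/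
theorem mealy_pair_of_finite_semigroups (S T : Type) [Semigroup S] [Finite S]
    [Nonempty S] [Semigroup T] [Finite T] [Nonempty T] :
    ∃ (A X : Type) (_ : Fintype A) (_ : Fintype X) (_ : Nonempty A) (_ : Nonempty X)
      (M : Mealy A X),
      Nonempty (↥M.sgp ≃* S) ∧ Nonempty (↥M.dual.sgp ≃* T) := by
  haveI := Fintype.ofFinite S
  haveI := Fintype.ofFinite T
  haveI : Fintype (WithOne T) := inferInstanceAs (Fintype (Option T))
  haveI : Fintype (WithOne S) := inferInstanceAs (Fintype (Option S))
  refine ⟨S × WithOne T, T × WithOne S, inferInstance, inferInstance,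
    inferInstance, inferInstance, pairMealy S T, ⟨pairEquiv S T⟩, ?_⟩
  rw [pairMealy_dual]
  exact ⟨pairEquiv T S⟩
end
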